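/- arXiv:2602.18244 — 2 statements merged into one kernel-verified Lean document; each statement's English description precedes it below -/
import Mathlib

section
/- For all integers m ≥ 3, n ≥ 2, k ≥ 2 with m − k ≥ 1, the signed generalized book graph (B(m,n,k),σ₁), where σ₁ has a single negative edge v₁u₁¹, satisfies χ'(B(m,n,k),σ₁) = n+1. -/
open scoped Classical

/-- The color set `M_q`: for `q = 2r`, `{±1, …, ±r}`; for `q = 2r+1`, `{0, ±1, …, ±r}`. -/
def colorSet (q : ℕ) : Set ℤ :=
  {c : ℤ | c.natAbs ≤ q / 2 ∧ (Even q → c ≠ 0)}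

/-- A proper `q`-edge coloring of the signed graph `(G, σ)`, given as an assignment
`γ v w` of a color to the incidence `(v, vw)`. -/
def IsProperSignedEdgeColoring {V : Type*} (G : SimpleGraph V)
    (σ : Sym2 V → ℤˣ) (q : ℕ) (γ : V → V → ℤ) : Prop :=
  (∀ ⦃v w : V⦄, G.Adj v w → γ v w ∈ colorSet q) ∧
  (∀ ⦃v w : V⦄, G.Adj v w → γ v w = (-(σ s(v, w) : ℤ)) * γ w v) ∧
  (∀ ⦃v w₁ w₂ : V⦄, G.Adj v w₁ → G.Adj v w₂ → w₁ ≠ w₂ → γ v w₁ ≠ γ v w₂)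

/-- The chromatic index of a signed graph: the least `q` admitting a proper
`q`-edge coloring. -/
noncomputable def signedChromaticIndex {V : Type*} (G : SimpleGraph V)
    (σ : Sym2 V → ℤˣ) : ℕ :=
  sInf {q : ℕ | ∃ γ : V → V → ℤ, IsProperSignedEdgeColoring G σ q γ}

/-- Vertices of the generalized book graph `B(m,n,k)`: the spine path `v₁ … v_k`
(`Sum.inl`) together with the internal vertices `u_j^i` of the `n` pages (`Sum.inr`). -/
abbrev BookVertex (m n k : ℕ) : Type := Fin k ⊕ Fin n × Fin (m - k)

/-- The generalized book graph `B(m,n,k)`: `n` cycles of length `m` sharing the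
common path `v₁ v₂ ⋯ v_k`, the `i`-th cycle being `v₁ u₁ⁱ u₂ⁱ ⋯ u_{m-k}ⁱ v_k ⋯ v₂ v₁`. -/
def bookGraph (m n k : ℕ) : SimpleGraph (BookVertex m n k) :=
  SimpleGraph.fromRel (fun x y =>
    match x, y with
    | Sum.inl a, Sum.inl b => (b : ℕ) = (a : ℕ) + 1
    | Sum.inl a, Sum.inr p =>
        ((a : ℕ) = 0 ∧ (p.2 : ℕ) = 0) ∨ ((a : ℕ) = k - 1 ∧ (p.2 : ℕ) = m - k - 1)
    | Sum.inr p, Sum.inr p' => p.1 = p'.1 ∧ (p'.2 : ℕ) = (p.2 : ℕ) + 1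
    | Sum.inr _, Sum.inl _ => False)

/-- The signature `σ_l` on `B(m,n,k)` whose negative edges are exactly
`v₁u₁ⁱ` for `1 ≤ i ≤ l`. -/
noncomputable def bookSigma (m n k l : ℕ) (hk : 0 < k) (hmk : 0 < m - k) :
    Sym2 (BookVertex m n k) → ℤˣ :=
  fun e =>
    if ∃ i : Fin n, (i : ℕ) < l ∧
        e = s(Sum.inl (⟨0, hk⟩ : Fin k),
              Sum.inr ((i, ⟨0, hmk⟩) : Fin n × Fin (m - k)))
    then -1 else 1


def iot (i : ℕ) : ℤ := if Even i then ((i / 2 : ℕ) + 1 : ℤ) else -((i / 2 : ℕ) + 1 : ℤ)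

lemma iot_ne_zero (i : ℕ) : iot i ≠ 0 := by
  unfold iot; split_ifs <;> omega

lemma iot_inj {a b : ℕ} (h : iot a = iot b) : a = b := by
  unfold iot at h
  split_ifs at h with h1 h2 h2 <;>
    simp only [Nat.even_iff, Nat.odd_iff] at h1 h2 <;> omega

lemma iot_natAbs (i : ℕ) : (iot i).natAbs = i / 2 + 1 := by
  unfold iot; split_ifs <;> omega

def rr (n : ℕ) : ℕ := (n + 1) / 2

lemma rr_pos {n : ℕ} (hn : 2 ≤ n) : 1 ≤ rr n := by unfold rr; omega

lemma iot_eq_r {n : ℕ} (hn : 2 ≤ n) : iot (if Even n then n - 2 else n - 1) = (rr n : ℤ) := by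
  unfold iot rr
  rcases Nat.even_or_odd n with h | h <;>
    simp only [Nat.even_iff, Nat.odd_iff] at h <;> split_ifs <;>
    simp_all [Nat.even_iff] <;> omega

lemma iot_eq_negr {n : ℕ} (hn : 2 ≤ n) : iot (if Even n then n - 1 else n) = -(rr n : ℤ) := by
  unfold iot rr
  rcases Nat.even_or_odd n with h | h <;>
    simp only [Nat.even_iff, Nat.odd_iff] at h <;> split_ifs <;>
    simp_all [Nat.even_iff] <;> omega

lemma eq_of_iot_eq_r {n x : ℕ} (hn : 2 ≤ n) (h : iot x = (rr n : ℤ)) :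
    x = if Even n then n - 2 else n - 1 :=
  iot_inj (h.trans (iot_eq_r hn).symm)

lemma eq_of_iot_eq_negr {n x : ℕ} (hn : 2 ≤ n) (h : iot x = -(rr n : ℤ)) :
    x = if Even n then n - 1 else n :=
  iot_inj (h.trans (iot_eq_negr hn).symm)

def alphaC (n i : ℕ) : ℤ := if Even n then (if i = 0 then 0 else iot (i - 1)) else iot i

def betaC (n i : ℕ) : ℤ :=
  if i = 0 then -(rr n : ℤ)
  else if Even n then (if i = 1 then 0 else iot (i - 2)) else iot (i - 1)

def qQ (n i : ℕ) : ℤ := if betaC n i = 0 then alphaC n i else -(betaC n i)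

def pP (n L i j : ℕ) : ℤ :=
  if j = 0 then alphaC n i else if j < L then qQ n i else -(betaC n i)

lemma alpha_inj {n : ℕ} (hn : 2 ≤ n) {i j : ℕ} (hi : i < n) (hj : j < n)
    (h : alphaC n i = alphaC n j) : i = j := by
  unfold alphaC at h
  split_ifs at h with h1 h2 h3 h3
  · omega
  · exact absurd h.symm (iot_ne_zero _)
  · exact absurd h (iot_ne_zero _)
  · have := iot_inj h; omega
  · have := iot_inj h; omega

lemma alpha_ne_negr {n : ℕ} (hn : 2 ≤ n) {i : ℕ} (hi : i < n) :
    alphaC n i ≠ -(rr n : ℤ) := by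
  intro h
  have hp := rr_pos hn
  unfold alphaC at h
  split_ifs at h with h1 h2
  · omega
  · have := eq_of_iot_eq_negr hn h; split_ifs at this <;> omega
  · have := eq_of_iot_eq_negr hn h; split_ifs at this <;> omega

lemma beta_inj {n : ℕ} (hn : 2 ≤ n) {i j : ℕ} (hi : i < n) (hj : j < n)
    (h : betaC n i = betaC n j) : i = j := by
  have hp := rr_pos hn
  unfold betaC at h
  rcases eq_or_ne i 0 with hi0 | hi0
  · rcases eq_or_ne j 0 with hj0 | hj0
    · omega
    · rw [if_pos hi0, if_neg hj0] at h
      split_ifs at h with h3 h4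
      · omega
      · have := eq_of_iot_eq_negr hn h.symm; split_ifs at this <;> omega
      · have := eq_of_iot_eq_negr hn h.symm; split_ifs at this <;> omega
  · rcases eq_or_ne j 0 with hj0 | hj0
    · rw [if_neg hi0, if_pos hj0] at h
      split_ifs at h with h3 h4
      · omega
      · have := eq_of_iot_eq_negr hn h; split_ifs at this <;> omega
      · have := eq_of_iot_eq_negr hn h; split_ifs at this <;> omega
    · rw [if_neg hi0, if_neg hj0] at h
      split_ifs at h with h3 h4 h5
      · omega
      · exact absurd h.symm (iot_ne_zero _)
      · exact absurd h (iot_ne_zero _)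
      · have := iot_inj h; omega
      · have := iot_inj h; omega

lemma beta_ne_r {n : ℕ} (hn : 2 ≤ n) {i : ℕ} (hi : i < n) :
    betaC n i ≠ (rr n : ℤ) := by
  intro h
  have hp := rr_pos hn
  unfold betaC at h
  split_ifs at h with h1 h2 h3
  · omega
  · omega
  · have := eq_of_iot_eq_r hn h; split_ifs at this <;> omega
  · have := eq_of_iot_eq_r hn h; split_ifs at this <;> omega

lemma beta_zero_eq (n : ℕ) : betaC n 0 = -(rr n : ℤ) := by unfold betaC; simp

lemma alpha_ne_zero_of_beta_eq_zero {n i : ℕ} (hn : 2 ≤ n) (hb : betaC n i = 0) :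
    alphaC n i ≠ 0 := by
  have hp := rr_pos hn
  unfold betaC at hb
  unfold alphaC
  split_ifs at hb with h1 h2 h3
  · omega
  · -- Even n, i = 1
    rw [if_pos h2, if_neg (by omega : ¬ i = 0)]
    exact iot_ne_zero _
  · exact absurd hb (iot_ne_zero _)
  · exact absurd hb (iot_ne_zero _)

lemma alpha_ne_beta {n i : ℕ} (hn : 2 ≤ n) (h1 : 1 ≤ i) (hi : i < n) :
    alphaC n i ≠ betaC n i := by
  have hp := rr_pos hn
  by_cases he : Even n
  · simp only [alphaC, betaC, if_pos he, if_neg (show ¬ i = 0 by omega)]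
    split_ifs with h4
    · exact iot_ne_zero _
    · intro h; have := iot_inj h; omega
  · simp only [alphaC, betaC, if_neg he, if_neg (show ¬ i = 0 by omega)]
    intro h; have := iot_inj h; omega

lemma alpha_zero_ne_r {n : ℕ} (hn : 2 ≤ n) : alphaC n 0 ≠ (rr n : ℤ) := by
  have hp := rr_pos hn
  by_cases he : Even n
  · simp [alphaC, he]
    omega
  · simp only [alphaC, if_neg he]
    intro h
    have h2 := eq_of_iot_eq_r hn h
    rw [if_neg he] at h2
    omega

lemma q_ne_zero {n i : ℕ} (hn : 2 ≤ n) : qQ n i ≠ 0 := by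
  unfold qQ; split_ifs with h
  · exact alpha_ne_zero_of_beta_eq_zero hn h
  · simpa using h

lemma q_ne_beta {n i : ℕ} (hn : 2 ≤ n) : qQ n i ≠ betaC n i := by
  unfold qQ; split_ifs with h
  · rw [h]; exact alpha_ne_zero_of_beta_eq_zero hn h
  · intro hc; apply h; omega

lemma incol_ne_q {n i : ℕ} (hn : 2 ≤ n) (hi : i < n) :
    (if i = 0 then alphaC n i else -alphaC n i) ≠ qQ n i := by
  split_ifs with h0
  · subst h0
    unfold qQ
    rw [if_neg (by rw [beta_zero_eq]; have := rr_pos hn; omega), beta_zero_eq, neg_neg]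
    exact alpha_zero_ne_r hn
  · unfold qQ
    split_ifs with h
    · have := alpha_ne_zero_of_beta_eq_zero hn h
      omega
    · intro hc
      exact alpha_ne_beta hn (by omega) hi (by omega)

lemma incol_ne_negbeta {n i : ℕ} (hn : 2 ≤ n) (hi : i < n) :
    (if i = 0 then alphaC n i else -alphaC n i) ≠ -(betaC n i) := by
  split_ifs with h0
  · subst h0
    rw [beta_zero_eq, neg_neg]
    exact alpha_zero_ne_r hn
  · intro hc
    exact alpha_ne_beta hn (by omega) hi (by omega)

-- membership lemmas
lemma neg_mem_colorSet {q : ℕ} {c : ℤ} (h : c ∈ colorSet q) : -c ∈ colorSet q := by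
  obtain ⟨h1, h2⟩ := h
  exact ⟨by omega, fun he => by have := h2 he; omega⟩

lemma iot_mem {n i : ℕ} (h : i / 2 + 1 ≤ (n + 1) / 2) : iot i ∈ colorSet (n + 1) :=
  ⟨by rw [iot_natAbs]; exact h, fun _ => iot_ne_zero i⟩

lemma r_mem {n : ℕ} (hn : 2 ≤ n) : -(rr n : ℤ) ∈ colorSet (n + 1) := by
  have := rr_pos hn
  exact ⟨by unfold rr at *; omega, fun _ => by omega⟩

lemma alpha_mem {n i : ℕ} (hn : 2 ≤ n) (hi : i < n) : alphaC n i ∈ colorSet (n + 1) := by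
  unfold alphaC
  split_ifs with h1 h2
  · refine ⟨by simp, fun he => ?_⟩
    rw [Nat.even_iff] at *
    omega
  · apply iot_mem
    rw [Nat.even_iff] at h1
    omega
  · apply iot_mem
    rcases Nat.even_or_odd n with h | h <;> rw [Nat.even_iff] at * <;> omega

lemma beta_mem {n i : ℕ} (hn : 2 ≤ n) (hi : i < n) : betaC n i ∈ colorSet (n + 1) := by
  unfold betaC
  split_ifs with h1 h2 h3
  · exact r_mem hn
  · refine ⟨by simp, fun he => ?_⟩
    rw [Nat.even_iff] at *
    omega
  · apply iot_mem
    rw [Nat.even_iff] at h2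
    omega
  · apply iot_mem
    rcases Nat.even_or_odd n with h | h <;> rw [Nat.even_iff] at * <;> omega

lemma q_mem {n i : ℕ} (hn : 2 ≤ n) (hi : i < n) : qQ n i ∈ colorSet (n + 1) := by
  unfold qQ
  split_ifs with h
  · exact alpha_mem hn hi
  · exact neg_mem_colorSet (beta_mem hn hi)

lemma p_mem {n L i j : ℕ} (hn : 2 ≤ n) (hi : i < n) : pP n L i j ∈ colorSet (n + 1) := by
  unfold pP
  split_ifs with h1 h2
  · exact alpha_mem hn hi
  · exact q_mem hn hi
  · exact neg_mem_colorSet (beta_mem hn hi)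


section BookAux

variable {m n k : ℕ}

/-- The explicit proper coloring of the signed book graph. -/
def gam (m n k : ℕ) : BookVertex m n k → BookVertex m n k → ℤ
  | Sum.inl a, Sum.inl b =>
      if (b : ℕ) = (a : ℕ) + 1 then -(rr n : ℤ)
      else if (a : ℕ) = (b : ℕ) + 1 then (rr n : ℤ) else 0
  | Sum.inl a, Sum.inr p =>
      if (a : ℕ) = 0 ∧ (p.2 : ℕ) = 0 then alphaC n p.1
      else if (a : ℕ) = k - 1 ∧ (p.2 : ℕ) = m - k - 1 then betaC n p.1 else 0
  | Sum.inr p, Sum.inl a =>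
      if (a : ℕ) = 0 ∧ (p.2 : ℕ) = 0 then
        (if (p.1 : ℕ) = 0 then alphaC n p.1 else -(alphaC n p.1))
      else if (a : ℕ) = k - 1 ∧ (p.2 : ℕ) = m - k - 1 then pP n (m - k) p.1 (m - k)
      else 0
  | Sum.inr p, Sum.inr p' =>
      if p.1 = p'.1 then
        (if (p'.2 : ℕ) = (p.2 : ℕ) + 1 then pP n (m - k) p.1 (p'.2 : ℕ)
         else if (p.2 : ℕ) = (p'.2 : ℕ) + 1 then -(pP n (m - k) p.1 (p.2 : ℕ)) else 0)
      else 0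

lemma pP_zero (n L i : ℕ) : pP n L i 0 = alphaC n i := by unfold pP; simp

lemma pP_mid {L j : ℕ} (n i : ℕ) (h1 : 1 ≤ j) (h2 : j < L) : pP n L i j = qQ n i := by
  unfold pP; rw [if_neg (by omega), if_pos h2]

lemma pP_last {L : ℕ} (n i : ℕ) (h1 : 1 ≤ L) : pP n L i L = -(betaC n i) := by
  unfold pP; rw [if_neg (by omega), if_neg (by omega)]

lemma adj_ll {a b : Fin k} (h : (bookGraph m n k).Adj (Sum.inl a) (Sum.inl b)) :
    (b : ℕ) = (a : ℕ) + 1 ∨ (a : ℕ) = (b : ℕ) + 1 := by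
  rw [bookGraph, SimpleGraph.fromRel_adj] at h
  rcases h.2 with h' | h'
  · exact Or.inl h'
  · exact Or.inr h'

lemma adj_lr {a : Fin k} {p : Fin n × Fin (m - k)}
    (h : (bookGraph m n k).Adj (Sum.inl a) (Sum.inr p)) :
    ((a : ℕ) = 0 ∧ (p.2 : ℕ) = 0) ∨ ((a : ℕ) = k - 1 ∧ (p.2 : ℕ) = m - k - 1) := by
  rw [bookGraph, SimpleGraph.fromRel_adj] at h
  rcases h.2 with h' | h'
  · exact h'
  · exact h'.elim

lemma adj_rl {a : Fin k} {p : Fin n × Fin (m - k)}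
    (h : (bookGraph m n k).Adj (Sum.inr p) (Sum.inl a)) :
    ((a : ℕ) = 0 ∧ (p.2 : ℕ) = 0) ∨ ((a : ℕ) = k - 1 ∧ (p.2 : ℕ) = m - k - 1) :=
  adj_lr h.symm

lemma adj_rr {p p' : Fin n × Fin (m - k)}
    (h : (bookGraph m n k).Adj (Sum.inr p) (Sum.inr p')) :
    p.1 = p'.1 ∧ ((p'.2 : ℕ) = (p.2 : ℕ) + 1 ∨ (p.2 : ℕ) = (p'.2 : ℕ) + 1) := by
  rw [bookGraph, SimpleGraph.fromRel_adj] at h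
  rcases h.2 with h' | h'
  · exact ⟨h'.1, Or.inl h'.2⟩
  · exact ⟨h'.1.symm, Or.inr h'.2⟩

section Sigma

variable (hk0 : 0 < k) (hmk0 : 0 < m - k)

lemma sigma_ll (a b : Fin k) :
    bookSigma m n k 1 hk0 hmk0 s(Sum.inl a, Sum.inl b) = 1 := by
  unfold bookSigma
  rw [if_neg]
  rintro ⟨i, -, heq⟩
  rw [Sym2.eq_iff] at heq
  rcases heq with ⟨-, h'⟩ | ⟨h', -⟩ <;> exact absurd h' (by simp)

lemma sigma_rr (p p' : Fin n × Fin (m - k)) :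
    bookSigma m n k 1 hk0 hmk0 s(Sum.inr p, Sum.inr p') = 1 := by
  unfold bookSigma
  rw [if_neg]
  rintro ⟨i, -, heq⟩
  rw [Sym2.eq_iff] at heq
  rcases heq with ⟨h', -⟩ | ⟨-, h'⟩ <;> exact absurd h' (by simp)

lemma sigma_lr_pos {a : Fin k} {p : Fin n × Fin (m - k)}
    (h : ¬((a : ℕ) = 0 ∧ (p.1 : ℕ) = 0 ∧ (p.2 : ℕ) = 0)) :
    bookSigma m n k 1 hk0 hmk0 s(Sum.inl a, Sum.inr p) = 1 := by
  unfold bookSigma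
  rw [if_neg]
  rintro ⟨i, hi, heq⟩
  rw [Sym2.eq_iff] at heq
  rcases heq with ⟨h1, h2⟩ | ⟨h1, -⟩
  · simp only [Sum.inl.injEq] at h1
    simp only [Sum.inr.injEq] at h2
    apply h
    subst h1; subst h2
    refine ⟨rfl, ?_, rfl⟩
    show (i : ℕ) = 0
    omega
  · exact absurd h1 (by simp)

lemma sigma_rl_pos {a : Fin k} {p : Fin n × Fin (m - k)}
    (h : ¬((a : ℕ) = 0 ∧ (p.1 : ℕ) = 0 ∧ (p.2 : ℕ) = 0)) :
    bookSigma m n k 1 hk0 hmk0 s(Sum.inr p, Sum.inl a) = 1 := by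
  rw [Sym2.eq_swap]
  exact sigma_lr_pos hk0 hmk0 h

lemma sigma_lr_neg {a : Fin k} {p : Fin n × Fin (m - k)}
    (h : (a : ℕ) = 0 ∧ (p.1 : ℕ) = 0 ∧ (p.2 : ℕ) = 0) :
    bookSigma m n k 1 hk0 hmk0 s(Sum.inl a, Sum.inr p) = -1 := by
  unfold bookSigma
  rw [if_pos]
  have ha : a = ⟨0, hk0⟩ := Fin.ext h.1
  have hp2 : p.2 = ⟨0, hmk0⟩ := Fin.ext h.2.2
  refine ⟨p.1, by omega, ?_⟩
  rw [Sym2.eq_iff]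
  left
  exact ⟨by rw [ha], by rw [← hp2]⟩

lemma sigma_rl_neg {a : Fin k} {p : Fin n × Fin (m - k)}
    (h : (a : ℕ) = 0 ∧ (p.1 : ℕ) = 0 ∧ (p.2 : ℕ) = 0) :
    bookSigma m n k 1 hk0 hmk0 s(Sum.inr p, Sum.inl a) = -1 := by
  rw [Sym2.eq_swap]
  exact sigma_lr_neg hk0 hmk0 h

end Sigma

end BookAux

section Proper

variable {m n k : ℕ}

lemma gam_ll_up {a b : Fin k} (h : (b : ℕ) = (a : ℕ) + 1) :
    gam m n k (Sum.inl a) (Sum.inl b) = -(rr n : ℤ) := by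
  show (if (b : ℕ) = (a : ℕ) + 1 then -(rr n : ℤ)
      else if (a : ℕ) = (b : ℕ) + 1 then (rr n : ℤ) else 0) = _
  rw [if_pos h]

lemma gam_ll_dn {a b : Fin k} (h : (a : ℕ) = (b : ℕ) + 1) :
    gam m n k (Sum.inl a) (Sum.inl b) = (rr n : ℤ) := by
  show (if (b : ℕ) = (a : ℕ) + 1 then -(rr n : ℤ)
      else if (a : ℕ) = (b : ℕ) + 1 then (rr n : ℤ) else 0) = _
  rw [if_neg (by omega), if_pos h]

lemma gam_lr_0 {a : Fin k} {p : Fin n × Fin (m - k)} (h1 : (a : ℕ) = 0)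
    (h2 : (p.2 : ℕ) = 0) :
    gam m n k (Sum.inl a) (Sum.inr p) = alphaC n p.1 := by
  show (if (a : ℕ) = 0 ∧ (p.2 : ℕ) = 0 then alphaC n p.1
      else if (a : ℕ) = k - 1 ∧ (p.2 : ℕ) = m - k - 1 then betaC n p.1 else 0) = _
  rw [if_pos ⟨h1, h2⟩]

lemma gam_lr_k (hkk : 2 ≤ k) {a : Fin k} {p : Fin n × Fin (m - k)}
    (h1 : (a : ℕ) = k - 1) (h2 : (p.2 : ℕ) = m - k - 1) :
    gam m n k (Sum.inl a) (Sum.inr p) = betaC n p.1 := by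
  show (if (a : ℕ) = 0 ∧ (p.2 : ℕ) = 0 then alphaC n p.1
      else if (a : ℕ) = k - 1 ∧ (p.2 : ℕ) = m - k - 1 then betaC n p.1 else 0) = _
  rw [if_neg (by omega), if_pos ⟨h1, h2⟩]

lemma gam_rl_0 {a : Fin k} {p : Fin n × Fin (m - k)} (h1 : (a : ℕ) = 0)
    (h2 : (p.2 : ℕ) = 0) :
    gam m n k (Sum.inr p) (Sum.inl a)
      = (if (p.1 : ℕ) = 0 then alphaC n p.1 else -(alphaC n p.1)) := by
  show (if (a : ℕ) = 0 ∧ (p.2 : ℕ) = 0 then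
        (if (p.1 : ℕ) = 0 then alphaC n p.1 else -(alphaC n p.1))
      else if (a : ℕ) = k - 1 ∧ (p.2 : ℕ) = m - k - 1 then pP n (m - k) p.1 (m - k)
      else 0) = _
  rw [if_pos ⟨h1, h2⟩]

lemma gam_rl_k (hkk : 2 ≤ k) {a : Fin k} {p : Fin n × Fin (m - k)}
    (h1 : (a : ℕ) = k - 1) (h2 : (p.2 : ℕ) = m - k - 1) :
    gam m n k (Sum.inr p) (Sum.inl a) = pP n (m - k) p.1 (m - k) := by
  show (if (a : ℕ) = 0 ∧ (p.2 : ℕ) = 0 then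
        (if (p.1 : ℕ) = 0 then alphaC n p.1 else -(alphaC n p.1))
      else if (a : ℕ) = k - 1 ∧ (p.2 : ℕ) = m - k - 1 then pP n (m - k) p.1 (m - k)
      else 0) = _
  rw [if_neg (by omega), if_pos ⟨h1, h2⟩]

lemma gam_rr_up {p p' : Fin n × Fin (m - k)} (h : p.1 = p'.1)
    (h2 : (p'.2 : ℕ) = (p.2 : ℕ) + 1) :
    gam m n k (Sum.inr p) (Sum.inr p') = pP n (m - k) p.1 (p'.2 : ℕ) := by
  show (if p.1 = p'.1 then
        (if (p'.2 : ℕ) = (p.2 : ℕ) + 1 then pP n (m - k) p.1 (p'.2 : ℕ)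
         else if (p.2 : ℕ) = (p'.2 : ℕ) + 1 then -(pP n (m - k) p.1 (p.2 : ℕ)) else 0)
      else 0) = _
  rw [if_pos h, if_pos h2]

lemma gam_rr_dn {p p' : Fin n × Fin (m - k)} (h : p.1 = p'.1)
    (h2 : (p.2 : ℕ) = (p'.2 : ℕ) + 1) :
    gam m n k (Sum.inr p) (Sum.inr p') = -(pP n (m - k) p.1 (p.2 : ℕ)) := by
  show (if p.1 = p'.1 then
        (if (p'.2 : ℕ) = (p.2 : ℕ) + 1 then pP n (m - k) p.1 (p'.2 : ℕ)
         else if (p.2 : ℕ) = (p'.2 : ℕ) + 1 then -(pP n (m - k) p.1 (p.2 : ℕ)) else 0)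
      else 0) = _
  rw [if_pos h, if_neg (by omega), if_pos h2]

lemma gam_mem (hn : 2 ≤ n) (hkk : 2 ≤ k) :
    ∀ ⦃v w : BookVertex m n k⦄, (bookGraph m n k).Adj v w →
      gam m n k v w ∈ colorSet (n + 1) := by
  have hrm : -(rr n : ℤ) ∈ colorSet (n + 1) := r_mem hn
  have hrm' : (rr n : ℤ) ∈ colorSet (n + 1) := by
    have := neg_mem_colorSet hrm; simpa using this
  rintro (a | p) (b | p') h
  · rcases adj_ll h with h1 | h1
    · rw [gam_ll_up h1]; exact hrm
    · rw [gam_ll_dn h1]; exact hrm'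
  · rcases adj_lr h with ⟨h1, h2⟩ | ⟨h1, h2⟩
    · rw [gam_lr_0 h1 h2]; exact alpha_mem hn p'.1.isLt
    · rw [gam_lr_k hkk h1 h2]; exact beta_mem hn p'.1.isLt
  · rcases adj_rl h with ⟨h1, h2⟩ | ⟨h1, h2⟩
    · rw [gam_rl_0 h1 h2]
      split_ifs
      · exact alpha_mem hn p.1.isLt
      · exact neg_mem_colorSet (alpha_mem hn p.1.isLt)
    · rw [gam_rl_k hkk h1 h2]; exact p_mem hn p.1.isLt
  · obtain ⟨hi, hd⟩ := adj_rr h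
    rcases hd with h1 | h1
    · rw [gam_rr_up hi h1]; exact p_mem hn p.1.isLt
    · rw [gam_rr_dn hi h1]; exact neg_mem_colorSet (p_mem hn p.1.isLt)

lemma gam_sign (hn : 2 ≤ n) (hkk : 2 ≤ k) (hmk : 1 ≤ m - k)
    (hk0 : 0 < k) (hmk0 : 0 < m - k) :
    ∀ ⦃v w : BookVertex m n k⦄, (bookGraph m n k).Adj v w →
      gam m n k v w = (-(bookSigma m n k 1 hk0 hmk0 s(v, w) : ℤ)) * gam m n k w v := by
  rintro (a | p) (b | p') h
  · rw [sigma_ll hk0 hmk0 a b]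
    rcases adj_ll h with h1 | h1
    · rw [gam_ll_up h1, gam_ll_dn h1]; simp
    · rw [gam_ll_dn h1, gam_ll_up h1]; simp
  · rcases adj_lr h with ⟨h1, h2⟩ | ⟨h1, h2⟩
    · rw [gam_lr_0 h1 h2, gam_rl_0 h1 h2]
      by_cases hp : (p'.1 : ℕ) = 0
      · rw [sigma_lr_neg hk0 hmk0 ⟨h1, hp, h2⟩, if_pos hp]; simp
      · rw [sigma_lr_pos hk0 hmk0 (by tauto), if_neg hp]; simp
    · rw [gam_lr_k hkk h1 h2, gam_rl_k hkk h1 h2,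
        sigma_lr_pos hk0 hmk0 (by omega), pP_last n _ hmk]
      simp
  · rcases adj_rl h with ⟨h1, h2⟩ | ⟨h1, h2⟩
    · rw [gam_rl_0 h1 h2, gam_lr_0 h1 h2]
      by_cases hp : (p.1 : ℕ) = 0
      · rw [sigma_rl_neg hk0 hmk0 ⟨h1, hp, h2⟩, if_pos hp]; simp
      · rw [sigma_rl_pos hk0 hmk0 (by tauto), if_neg hp]; simp
    · rw [gam_rl_k hkk h1 h2, gam_lr_k hkk h1 h2,
        sigma_rl_pos hk0 hmk0 (by omega), pP_last n _ hmk]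
      simp
  · obtain ⟨hi, hd⟩ := adj_rr h
    rw [sigma_rr hk0 hmk0 p p']
    rcases hd with h1 | h1
    · rw [gam_rr_up hi h1, gam_rr_dn hi.symm h1, ← hi]; simp
    · rw [gam_rr_dn hi h1, gam_rr_up hi.symm h1, ← hi]; simp

lemma gam_distinct (hn : 2 ≤ n) (hkk : 2 ≤ k) (hmk : 1 ≤ m - k) :
    ∀ ⦃v w₁ w₂ : BookVertex m n k⦄, (bookGraph m n k).Adj v w₁ →
      (bookGraph m n k).Adj v w₂ → w₁ ≠ w₂ →
      gam m n k v w₁ ≠ gam m n k v w₂ := by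
  have hrp := rr_pos hn
  rintro (a | p₀) (b | p₁) (c | p₂) h1 h2 hne
  · -- spine, spine/spine
    have hbc : (b : ℕ) ≠ (c : ℕ) := fun h => hne (by rw [Fin.ext h])
    rcases adj_ll h1 with hb | hb <;> rcases adj_ll h2 with hc | hc
    · omega
    · rw [gam_ll_up hb, gam_ll_dn hc]; omega
    · rw [gam_ll_dn hb, gam_ll_up hc]; omega
    · omega
  · -- spine, spine/page
    rcases adj_lr h2 with ⟨ha0, hp0⟩ | ⟨hak, hpL⟩
    · have hb : (b : ℕ) = (a : ℕ) + 1 := by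
        rcases adj_ll h1 with h | h
        · exact h
        · omega
      rw [gam_ll_up hb, gam_lr_0 ha0 hp0]
      exact fun h => alpha_ne_negr hn p₂.1.isLt h.symm
    · have hb : (a : ℕ) = (b : ℕ) + 1 := by
        rcases adj_ll h1 with h | h
        · have := b.isLt; omega
        · exact h
      rw [gam_ll_dn hb, gam_lr_k hkk hak hpL]
      exact fun h => beta_ne_r hn p₂.1.isLt h.symm
  · -- spine, page/spine
    rcases adj_lr h1 with ⟨ha0, hp0⟩ | ⟨hak, hpL⟩
    · have hb : (c : ℕ) = (a : ℕ) + 1 := by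
        rcases adj_ll h2 with h | h
        · exact h
        · omega
      rw [gam_ll_up hb, gam_lr_0 ha0 hp0]
      exact fun h => alpha_ne_negr hn p₁.1.isLt h
    · have hb : (a : ℕ) = (c : ℕ) + 1 := by
        rcases adj_ll h2 with h | h
        · have := c.isLt; omega
        · exact h
      rw [gam_ll_dn hb, gam_lr_k hkk hak hpL]
      exact fun h => beta_ne_r hn p₁.1.isLt h
  · -- spine, page/page
    rcases adj_lr h1 with ⟨ha0, hp10⟩ | ⟨hak, hp1L⟩ <;>
      rcases adj_lr h2 with ⟨ha0', hp20⟩ | ⟨hak', hp2L⟩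
    · have hp12 : (p₁.1 : ℕ) ≠ (p₂.1 : ℕ) := by
        intro hh
        exact hne (by
          rw [Prod.ext (Fin.ext hh) (Fin.ext (by omega : ((p₁.2 : ℕ)) = (p₂.2 : ℕ)))])
      rw [gam_lr_0 ha0 hp10, gam_lr_0 ha0' hp20]
      exact fun h => hp12 (alpha_inj hn p₁.1.isLt p₂.1.isLt h)
    · omega
    · omega
    · have hp12 : (p₁.1 : ℕ) ≠ (p₂.1 : ℕ) := by
        intro hh
        exact hne (by
          rw [Prod.ext (Fin.ext hh) (Fin.ext (by omega : ((p₁.2 : ℕ)) = (p₂.2 : ℕ)))])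
      rw [gam_lr_k hkk hak hp1L, gam_lr_k hkk hak' hp2L]
      exact fun h => hp12 (beta_inj hn p₁.1.isLt p₂.1.isLt h)
  · -- page, spine/spine
    rcases adj_rl h1 with ⟨hb0, hj0⟩ | ⟨hbk, hjL⟩ <;>
      rcases adj_rl h2 with ⟨hc0, hj0'⟩ | ⟨hck, hjL'⟩
    · exact absurd (by rw [Fin.ext (by omega : (b : ℕ) = (c : ℕ))]) hne
    · rw [gam_rl_0 hb0 hj0, gam_rl_k hkk hck hjL', pP_last n _ hmk]
      exact incol_ne_negbeta hn p₀.1.isLt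
    · rw [gam_rl_0 hc0 hj0', gam_rl_k hkk hbk hjL, pP_last n _ hmk]
      exact fun h => incol_ne_negbeta hn p₀.1.isLt h.symm
    · exact absurd (by rw [Fin.ext (by omega : (b : ℕ) = (c : ℕ))]) hne
  · -- page, spine/page
    obtain ⟨hi2, hd2⟩ := adj_rr h2
    rcases adj_rl h1 with ⟨hb0, hj0⟩ | ⟨hbk, hjL⟩
    · have hup : (p₂.2 : ℕ) = (p₀.2 : ℕ) + 1 := by
        rcases hd2 with h' | h'
        · exact h'
        · omega
      rw [gam_rl_0 hb0 hj0, gam_rr_up hi2 hup]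
      have e1 : (p₂.2 : ℕ) = 1 := by omega
      rw [e1]
      by_cases hL : 1 < m - k
      · rw [pP_mid n _ le_rfl hL]
        exact incol_ne_q hn p₀.1.isLt
      · have e2 : (1 : ℕ) = m - k := by omega
        rw [e2, pP_last n _ hmk]
        exact incol_ne_negbeta hn p₀.1.isLt
    · have hdn : (p₀.2 : ℕ) = (p₂.2 : ℕ) + 1 := by
        rcases hd2 with h' | h'
        · have := p₂.2.isLt; omega
        · exact h'
      rw [gam_rl_k hkk hbk hjL, gam_rr_dn hi2 hdn, pP_last n _ hmk,
        pP_mid n _ (by omega) p₀.2.isLt]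
      have := q_ne_beta (i := (p₀.1 : ℕ)) hn
      omega
  · -- page, page/spine
    obtain ⟨hi1, hd1⟩ := adj_rr h1
    rcases adj_rl h2 with ⟨hb0, hj0⟩ | ⟨hbk, hjL⟩
    · have hup : (p₁.2 : ℕ) = (p₀.2 : ℕ) + 1 := by
        rcases hd1 with h' | h'
        · exact h'
        · omega
      rw [gam_rl_0 hb0 hj0, gam_rr_up hi1 hup]
      have e1 : (p₁.2 : ℕ) = 1 := by omega
      rw [e1]
      by_cases hL : 1 < m - k
      · rw [pP_mid n _ le_rfl hL]
        exact fun h => incol_ne_q hn p₀.1.isLt h.symm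
      · have e2 : (1 : ℕ) = m - k := by omega
        rw [e2, pP_last n _ hmk]
        exact fun h => incol_ne_negbeta hn p₀.1.isLt h.symm
    · have hdn : (p₀.2 : ℕ) = (p₁.2 : ℕ) + 1 := by
        rcases hd1 with h' | h'
        · have := p₁.2.isLt; omega
        · exact h'
      rw [gam_rl_k hkk hbk hjL, gam_rr_dn hi1 hdn, pP_last n _ hmk,
        pP_mid n _ (by omega) p₀.2.isLt]
      have := q_ne_beta (i := (p₀.1 : ℕ)) hn
      omega
  · -- page, page/page
    obtain ⟨hi1, hd1⟩ := adj_rr h1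
    obtain ⟨hi2, hd2⟩ := adj_rr h2
    rcases hd1 with hu1 | hu1 <;> rcases hd2 with hu2 | hu2
    · exact absurd (Prod.ext (hi1.symm.trans hi2) (Fin.ext (by omega))) (fun hh => hne (congrArg Sum.inr hh))
    · rw [gam_rr_up hi1 hu1, gam_rr_dn hi2 hu2,
        pP_mid n _ (by omega) p₁.2.isLt, pP_mid n _ (by omega) p₀.2.isLt]
      have := q_ne_zero (n := n) (i := (p₀.1 : ℕ)) hn
      omega
    · rw [gam_rr_dn hi1 hu1, gam_rr_up hi2 hu2,
        pP_mid n _ (by omega) p₂.2.isLt, pP_mid n _ (by omega) p₀.2.isLt]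
      have := q_ne_zero (n := n) (i := (p₀.1 : ℕ)) hn
      omega
    · exact absurd (Prod.ext (hi1.symm.trans hi2) (Fin.ext (by omega))) (fun hh => hne (congrArg Sum.inr hh))

end Proper

section Lower

lemma chrom_lower {m n k : ℕ} (hn : 2 ≤ n) (hk : 2 ≤ k) (hmk : 1 ≤ m - k)
    (σ : Sym2 (BookVertex m n k) → ℤˣ) (q : ℕ)
    (γ : BookVertex m n k → BookVertex m n k → ℤ)
    (h : IsProperSignedEdgeColoring (bookGraph m n k) σ q γ) : n + 1 ≤ q := by
  obtain ⟨ha, -, hc⟩ := h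
  have adj1 : ∀ i : Fin n,
      (bookGraph m n k).Adj (Sum.inl ⟨0, by omega⟩) (Sum.inr (i, ⟨0, by omega⟩)) := by
    intro i
    rw [bookGraph, SimpleGraph.fromRel_adj]
    exact ⟨by simp, Or.inl (Or.inl ⟨rfl, rfl⟩)⟩
  have adj2 : (bookGraph m n k).Adj (Sum.inl ⟨0, by omega⟩) (Sum.inl ⟨1, by omega⟩) := by
    rw [bookGraph, SimpleGraph.fromRel_adj]
    exact ⟨by simp [Fin.ext_iff], Or.inl rfl⟩
  set f : Fin (n + 1) → ℤ := fun i =>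
    if h : (i : ℕ) < n then γ (Sum.inl ⟨0, by omega⟩) (Sum.inr (⟨(i : ℕ), h⟩, ⟨0, by omega⟩))
    else γ (Sum.inl ⟨0, by omega⟩) (Sum.inl ⟨1, by omega⟩) with hf
  have hinj : Function.Injective f := by
    intro i j hij
    by_contra hne'
    rw [hf] at hij
    simp only [] at hij
    split_ifs at hij with hi hj hj
    · refine absurd hij (hc (adj1 ⟨(i : ℕ), hi⟩) (adj1 ⟨(j : ℕ), hj⟩) ?_)
      intro hcon
      simp only [Sum.inr.injEq, Prod.mk.injEq, Fin.mk.injEq] at hcon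
      exact hne' (Fin.ext hcon.1)
    · exact absurd hij (hc (adj1 ⟨(i : ℕ), hi⟩) adj2 (by simp))
    · exact absurd hij (hc adj2 (adj1 ⟨(j : ℕ), hj⟩) (by simp))
    · exact hne' (Fin.ext (by omega))
  classical
  set T : Finset ℤ :=
    (Finset.Icc (-(q / 2 : ℤ)) (q / 2)).filter (fun c => ¬(Even q ∧ c = 0)) with hT
  have hsub : ∀ i, f i ∈ T := by
    intro i
    have hmem : f i ∈ colorSet q := by
      rw [hf]
      simp only []
      split_ifs with hi
      · exact ha (adj1 _)
      · exact ha adj2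
    obtain ⟨hA, hB⟩ := hmem
    rw [hT]
    simp only [Finset.mem_filter, Finset.mem_Icc]
    refine ⟨⟨by omega, by omega⟩, ?_⟩
    rintro ⟨hq, h0⟩
    exact hB hq h0
  have hcard : (n + 1 : ℕ) ≤ T.card := by
    have h2 := Finset.card_le_card_of_injOn (s := (Finset.univ : Finset (Fin (n+1)))) f (fun i _ => hsub i)
      (Function.Injective.injOn hinj)
    simpa using h2
  have hTq : T.card ≤ q := by
    by_cases hq : Even q
    · have hss : T ⊆ (Finset.Icc (-(q / 2 : ℤ)) (q / 2)).erase 0 := by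
        intro c hcmem
        rw [hT] at hcmem
        simp only [Finset.mem_filter] at hcmem
        refine Finset.mem_erase.mpr ⟨fun h0 => hcmem.2 ⟨hq, h0⟩, hcmem.1⟩
      refine le_trans (Finset.card_le_card hss) ?_
      rw [Finset.card_erase_of_mem (by simp only [Finset.mem_Icc]; omega), Int.card_Icc]
      rw [Nat.even_iff] at hq
      omega
    · refine le_trans (Finset.card_le_card (Finset.filter_subset _ _)) ?_
      rw [Int.card_Icc]
      rw [Nat.even_iff] at hq
      omega
  omega

end Lower

/-- For all `m ≥ 3`, `n ≥ 2`, `k ≥ 2` with `m - k ≥ 1`, the signed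
generalized book graph `(B(m,n,k), σ₁)`, with the single negative edge `v₁u₁¹`,
has chromatic index `n + 1`. -/
theorem book_chromatic_index_sigma_one (m n k : ℕ) (hm : 3 ≤ m) (hn : 2 ≤ n)
    (hk : 2 ≤ k) (hmk : 1 ≤ m - k) :
    signedChromaticIndex (bookGraph m n k)
      (bookSigma m n k 1 (by omega) (by omega)) = n + 1 := by
  have hk0 : 0 < k := by omega
  have hmk0 : 0 < m - k := by omega
  have hmem : (n + 1) ∈ {q : ℕ | ∃ γ : BookVertex m n k → BookVertex m n k → ℤ,
      IsProperSignedEdgeColoring (bookGraph m n k)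
        (bookSigma m n k 1 (by omega) (by omega)) q γ} :=
    ⟨gam m n k, gam_mem hn hk, gam_sign hn hk hmk hk0 hmk0, gam_distinct hn hk hmk⟩
  refine le_antisymm (Nat.sInf_le hmem) (le_csInf ⟨n + 1, hmem⟩ ?_)
  rintro q ⟨γ, hγ⟩
  exact chrom_lower hn hk hmk _ q γ hγ
end

section
/- For all integers m ≥ 3, n ≥ 3, k ≥ 2 with m − k ≥ 1, and every integer l with 2 ≤ l ≤ n−1, the signed generalized book graph (B(m,n,k),σ_l), where σ_l has negative edge set {v₁u₁ⁱ : 1 ≤ i ≤ l}, satisfies χ'(B(m,n,k),σ_l) = n+1. -/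
open scoped Classical

/-!
Since `|M_q| = q` and `v₁` has `n + 1` neighbours, `χ' ≥ n + 1`. For the upper bound enumerate
`M_{n+1}` as `c₀, …, cₙ` (so `c_j ≠ 0` for `j ≥ 1`) and let `π` be the cycle `(0 1 ⋯ l-1)` on the
pages. Every spine edge gets `cₙ` at its lower end, `v₁u₁ⁱ` gets `cᵢ` at `v₁`, and `u_{m-k}ⁱv_k`
gets `c_{π i}` at `u_{m-k}ⁱ`; the sign rule fixes the other ends. The inner path of page `i`
alternates `xᵢ, -xᵢ` for a nonzero `xᵢ ∈ {±1, 2} ⊆ M_{n+1}` avoiding the colours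
already present at the ends of the path. When `m - k = 1` the vertex `u₁ⁱ` sees both `v₁` and
`v_k`: for a negative page its colours are `cᵢ ≠ c_{π i}` because `π` moves every negative page,
and for a positive page they are `-cᵢ ≠ cᵢ`.
-/

def colorSeq (j : ℕ) : ℤ := if Even j then -((j / 2 : ℕ) : ℤ) else ((j / 2 + 1 : ℕ) : ℤ)

lemma colorSeq_injective : Function.Injective colorSeq := by
  intro i j h
  simp only [colorSeq, Nat.even_iff] at h
  split_ifs at h <;> omega

lemma colorSeq_eq_zero_iff {j : ℕ} : colorSeq j = 0 ↔ j = 0 := by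
  simp only [colorSeq, Nat.even_iff]
  split_ifs <;> omega

/-- The `j`-th element of `M_q` for `j < q`; the offset skips the color `0` when `q` is even. -/
def enumColor (q j : ℕ) : ℤ := colorSeq (j + (q + 1) % 2)

lemma enumColor_injective (q : ℕ) : Function.Injective (enumColor q) :=
  fun _ _ h => by have := colorSeq_injective h; omega

lemma enumColor_ne_zero {q j : ℕ} (hj : 0 < j) : enumColor q j ≠ 0 := by
  rw [enumColor, Ne, colorSeq_eq_zero_iff]; omega

lemma enumColor_mem_colorSet {q j : ℕ} (hj : j < q) : enumColor q j ∈ colorSet q := by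
  refine ⟨?_, fun hq => ?_⟩
  · simp only [enumColor, colorSeq, Nat.even_iff]
    split_ifs <;> omega
  · rw [enumColor, Ne, colorSeq_eq_zero_iff]
    rw [Nat.even_iff] at hq; omega

lemma colorSet_eq_range (q : ℕ) : colorSet q = Set.range (enumColor q ∘ (Fin.val : Fin q → ℕ)) := by
  refine Set.Subset.antisymm (fun c ⟨hc, hq⟩ => ?_) ?_
  · rw [Nat.even_iff] at hq
    refine ⟨⟨(if 0 < c then 2 * c - 1 else -2 * c).toNat - (q + 1) % 2, ?_⟩, ?_⟩
    · split_ifs <;> omega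
    · simp only [Function.comp_apply, enumColor, colorSeq, Nat.even_iff]
      split_ifs <;> omega
  · rintro _ ⟨j, rfl⟩
    exact enumColor_mem_colorSet j.isLt

lemma ncard_colorSet (q : ℕ) : (colorSet q).ncard = q := by
  rw [colorSet_eq_range, Set.ncard_range_of_injective
    ((enumColor_injective q).comp Fin.val_injective), Nat.card_eq_fintype_card, Fintype.card_fin]

lemma colorSet_finite (q : ℕ) : (colorSet q).Finite :=
  colorSet_eq_range q ▸ Set.finite_range _

def avoidingColor (a b : ℤ) : ℤ :=
  if a ≠ 1 ∧ b ≠ 1 then 1 else if a ≠ -1 ∧ b ≠ -1 then -1 else 2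

lemma avoidingColor_ne (a b : ℤ) :
    avoidingColor a b ≠ 0 ∧ avoidingColor a b ≠ a ∧ avoidingColor a b ≠ b := by
  unfold avoidingColor; split_ifs <;> omega

lemma avoidingColor_mem_colorSet {q : ℕ} (hq : 4 ≤ q) (a b : ℤ) :
    avoidingColor a b ∈ colorSet q := by
  refine ⟨?_, fun _ => (avoidingColor_ne a b).1⟩
  unfold avoidingColor; split_ifs <;> simp <;> omega

lemma neg_units_mul_eq_of_eq_neg_units_mul {u : ℤˣ} {a b : ℤ} (h : a = -(u : ℤ) * b) :
    b = -(u : ℤ) * a := by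
  rw [h, ← mul_assoc, neg_mul_neg, ← Units.val_mul, Int.units_mul_self, Units.val_one, one_mul]

namespace IsProperSignedEdgeColoring

variable {V : Type*} {G : SimpleGraph V} {σ : Sym2 V → ℤˣ} {q : ℕ} {γ : V → V → ℤ}

theorem le_of_injective_adj (hγ : IsProperSignedEdgeColoring G σ q γ) {v : V} {d : ℕ}
    {w : Fin d → V} (hw : Function.Injective w) (hadj : ∀ i, G.Adj v (w i)) : d ≤ q := by
  have hinj : Function.Injective fun i => γ v (w i) :=
    fun i j h => hw <| of_not_not fun hne => hγ.2.2 (hadj i) (hadj j) hne h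
  calc d = (Set.range fun i => γ v (w i)).ncard := by
        rw [Set.ncard_range_of_injective hinj, Nat.card_eq_fintype_card, Fintype.card_fin]
    _ ≤ (colorSet q).ncard :=
        Set.ncard_le_ncard (Set.range_subset_iff.2 fun i => hγ.1 (hadj i)) (colorSet_finite q)
    _ = q := ncard_colorSet q

theorem signedChromaticIndex_eq (hγ : IsProperSignedEdgeColoring G σ q γ) {v : V}
    {w : Fin q → V} (hw : Function.Injective w) (hadj : ∀ i, G.Adj v (w i)) :
    signedChromaticIndex G σ = q :=
  le_antisymm (Nat.sInf_le ⟨γ, hγ⟩)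
    (le_csInf ⟨q, γ, hγ⟩ fun _ ⟨_, h⟩ => h.le_of_injective_adj hw hadj)

end IsProperSignedEdgeColoring

section BookGraph

variable {m n k : ℕ}

@[simp] lemma bookGraph_adj_inl_inl {a b : Fin k} :
    (bookGraph m n k).Adj (.inl a) (.inl b) ↔ (b : ℕ) = a + 1 ∨ (a : ℕ) = b + 1 := by
  simp only [bookGraph, SimpleGraph.fromRel_adj, ne_eq, Sum.inl.injEq, Fin.ext_iff]
  omega

@[simp] lemma bookGraph_adj_inl_inr {a : Fin k} {p : Fin n × Fin (m - k)} :
    (bookGraph m n k).Adj (.inl a) (.inr p) ↔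
      (a : ℕ) = 0 ∧ (p.2 : ℕ) = 0 ∨ (a : ℕ) = k - 1 ∧ (p.2 : ℕ) = m - k - 1 := by
  simp [bookGraph]

@[simp] lemma bookGraph_adj_inr_inr {p p' : Fin n × Fin (m - k)} :
    (bookGraph m n k).Adj (.inr p) (.inr p') ↔
      p.1 = p'.1 ∧ ((p'.2 : ℕ) = p.2 + 1 ∨ (p.2 : ℕ) = p'.2 + 1) := by
  simp only [bookGraph, SimpleGraph.fromRel_adj, ne_eq, Sum.inr.injEq, Prod.ext_iff, Fin.ext_iff]
  constructor
  · rintro ⟨-, ⟨h, h'⟩ | ⟨h, h'⟩⟩ <;> omega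
  · rintro ⟨h, h' | h'⟩ <;> omega

lemma exists_injective_bookGraph_adj (hk : 2 ≤ k) (hmk : 0 < m - k) :
    ∃ (v : BookVertex m n k) (w : Fin (n + 1) → BookVertex m n k),
      Function.Injective w ∧ ∀ i, (bookGraph m n k).Adj v (w i) := by
  refine ⟨.inl ⟨0, by omega⟩, Fin.cons (.inl ⟨1, by omega⟩) fun i => .inr (i, ⟨0, hmk⟩),
    Fin.cons_injective_iff.2 ⟨by simp, fun i j h => by simpa using h⟩,
    Fin.cases (by simp) fun i => by simp⟩

variable (l : ℕ) (hk : 0 < k) (hmk : 0 < m - k)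

@[simp] lemma bookSigma_inl_inl (a b : Fin k) :
    bookSigma m n k l hk hmk s(.inl a, .inl b) = 1 := by
  simp [bookSigma]

@[simp] lemma bookSigma_inr_inr (p p' : Fin n × Fin (m - k)) :
    bookSigma m n k l hk hmk s(.inr p, .inr p') = 1 := by
  simp [bookSigma]

lemma bookSigma_inl_inr (a : Fin k) (p : Fin n × Fin (m - k)) :
    bookSigma m n k l hk hmk s(.inl a, .inr p) =
      if (a : ℕ) = 0 ∧ (p.2 : ℕ) = 0 ∧ (p.1 : ℕ) < l then -1 else 1 := by
  simp only [bookSigma, Sym2.eq_iff, Sum.inl.injEq, Sum.inr.injEq, reduceCtorEq, and_false,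
    or_false, Prod.ext_iff, Fin.ext_iff]
  congr 1
  exact propext ⟨fun ⟨i, hi, ha, h1, h2⟩ => ⟨ha, h2, h1 ▸ hi⟩,
    fun ⟨ha, h2, hi⟩ => ⟨p.1, hi, ha, rfl, h2⟩⟩

end BookGraph

section BookColoring

variable {m k : ℕ} (n l : ℕ) (π : Equiv.Perm (Fin n))

def pageColor (i : Fin n) : ℤ := enumColor (n + 1) i

def spineColor : ℤ := enumColor (n + 1) n

/-- The colour of `v₁u₁ⁱ` at `u₁ⁱ`, forced by the sign rule. -/
def firstColor (i : Fin n) : ℤ := if (i : ℕ) < l then pageColor n i else -pageColor n i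

def innerColor (i : Fin n) : ℤ := avoidingColor (firstColor n l i) (-pageColor n (π i))

def bookColoring : BookVertex m n k → BookVertex m n k → ℤ
  | .inl a, .inl b => if a < b then spineColor n else -spineColor n
  | .inl a, .inr p => if (a : ℕ) = 0 then pageColor n p.1 else -pageColor n (π p.1)
  | .inr p, .inl a => if (a : ℕ) = 0 then firstColor n l p.1 else pageColor n (π p.1)
  | .inr p, .inr p' => if p.2 < p'.2 then innerColor n l π p.1 else -innerColor n l π p.1

variable {n l π}

lemma pageColor_injective : Function.Injective (pageColor n) :=
  (enumColor_injective _).comp Fin.val_injective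

lemma pageColor_ne_spineColor (i : Fin n) : pageColor n i ≠ spineColor n :=
  fun h => i.isLt.ne (enumColor_injective _ h)

lemma bookColoring_mem_colorSet (hn : 3 ≤ n) (v w : BookVertex m n k) :
    bookColoring n l π v w ∈ colorSet (n + 1) := by
  have hspine : spineColor n ∈ colorSet (n + 1) := enumColor_mem_colorSet (by omega)
  have hpage (i : Fin n) : pageColor n i ∈ colorSet (n + 1) :=
    enumColor_mem_colorSet (by omega)
  have hinner (i : Fin n) : innerColor n l π i ∈ colorSet (n + 1) :=
    avoidingColor_mem_colorSet (by omega) _ _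
  rcases v with a | p <;> rcases w with b | p' <;> simp only [bookColoring, firstColor] <;>
    split_ifs <;> (try apply neg_mem_colorSet) <;> first
      | exact hspine | exact hpage _ | exact hinner _

lemma bookColoring_sign (hk : 2 ≤ k) (hmk : 0 < m - k) {v w : BookVertex m n k}
    (hadj : (bookGraph m n k).Adj v w) :
    bookColoring n l π v w = -(bookSigma m n k l (by omega) hmk s(v, w) : ℤ) *
      bookColoring n l π w v := by
  have hmixed (a : Fin k) (p : Fin n × Fin (m - k)) (h : (bookGraph m n k).Adj (.inl a) (.inr p)) :
      bookColoring n l π (.inl a) (.inr p) =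
        -(bookSigma m n k l (by omega) hmk s(.inl a, .inr p) : ℤ) *
          bookColoring n l π (.inr p) (.inl a) := by
    rw [bookGraph_adj_inl_inr] at h
    rw [bookSigma_inl_inr]
    simp only [bookColoring, firstColor]
    split_ifs <;> first | omega | simp
  rcases v with a | p <;> rcases w with b | p'
  · rw [bookGraph_adj_inl_inl] at hadj
    simp only [bookColoring, bookSigma_inl_inl, Units.val_one, Fin.lt_def]
    split_ifs <;> omega
  · exact hmixed a p' hadj
  · rw [Sym2.eq_swap]
    exact neg_units_mul_eq_of_eq_neg_units_mul (hmixed b p hadj.symm)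
  · obtain ⟨hpage, hadj⟩ := bookGraph_adj_inr_inr.1 hadj
    simp only [bookColoring, bookSigma_inr_inr, Units.val_one, Fin.lt_def, hpage]
    split_ifs <;> omega

lemma bookColoring_ne_of_inl (hn : 0 < n) (hk : 2 ≤ k) {a : Fin k} {w₁ w₂ : BookVertex m n k}
    (h₁ : (bookGraph m n k).Adj (.inl a) w₁) (h₂ : (bookGraph m n k).Adj (.inl a) w₂)
    (hne : w₁ ≠ w₂) : bookColoring n l π (.inl a) w₁ ≠ bookColoring n l π (.inl a) w₂ := by
  have hspine : spineColor n ≠ 0 := enumColor_ne_zero hn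
  have hmixed (b : Fin k) (p : Fin n × Fin (m - k)) (hb : (bookGraph m n k).Adj (.inl a) (.inl b))
      (hp : (bookGraph m n k).Adj (.inl a) (.inr p)) :
      bookColoring n l π (.inl a) (.inl b : BookVertex m n k) ≠
        bookColoring n l π (.inl a) (.inr p) := by
    rw [bookGraph_adj_inl_inl] at hb
    rw [bookGraph_adj_inl_inr] at hp
    have := pageColor_ne_spineColor p.1
    have := pageColor_ne_spineColor (π p.1)
    simp only [bookColoring, Fin.lt_def]
    split_ifs <;> omega
  rcases w₁ with b | p <;> rcases w₂ with b' | p'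
  · rw [bookGraph_adj_inl_inl] at h₁ h₂
    have : (b : ℕ) ≠ b' := fun h => hne (congrArg _ (Fin.ext h))
    simp only [bookColoring, Fin.lt_def]
    split_ifs <;> omega
  · exact hmixed b p' h₁ h₂
  · exact (hmixed b' p h₂ h₁).symm
  · rw [bookGraph_adj_inl_inr] at h₁ h₂
    have hpage : p.1 ≠ p'.1 := fun h => hne (congrArg _ (Prod.ext h (Fin.ext (by omega))))
    have := pageColor_injective.ne hpage
    have := pageColor_injective.ne (π.injective.ne hpage)
    simp only [bookColoring]
    split_ifs <;> omega

lemma bookColoring_ne_of_inr (hk : 2 ≤ k) (hπ : ∀ i, pageColor n (π i) ≠ firstColor n l i)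
    {p : Fin n × Fin (m - k)} {w₁ w₂ : BookVertex m n k}
    (h₁ : (bookGraph m n k).Adj (.inr p) w₁) (h₂ : (bookGraph m n k).Adj (.inr p) w₂)
    (hne : w₁ ≠ w₂) : bookColoring n l π (.inr p) w₁ ≠ bookColoring n l π (.inr p) w₂ := by
  have hinner := avoidingColor_ne (firstColor n l p.1) (-pageColor n (π p.1))
  have hmixed (a : Fin k) (p' : Fin n × Fin (m - k))
      (ha : (bookGraph m n k).Adj (.inr p) (.inl a))
      (hp' : (bookGraph m n k).Adj (.inr p) (.inr p')) :
      bookColoring n l π (.inr p) (.inl a) ≠ bookColoring n l π (.inr p) (.inr p') := by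
    rw [SimpleGraph.adj_comm, bookGraph_adj_inl_inr] at ha
    rw [bookGraph_adj_inr_inr] at hp'
    have := p'.2.isLt
    simp only [bookColoring, innerColor, Fin.lt_def]
    split_ifs <;> omega
  rcases w₁ with a | p₁ <;> rcases w₂ with a' | p₂
  · rw [SimpleGraph.adj_comm, bookGraph_adj_inl_inr] at h₁ h₂
    have : (a : ℕ) ≠ a' := fun h => hne (congrArg _ (Fin.ext h))
    have := hπ p.1
    simp only [bookColoring]
    split_ifs <;> omega
  · exact hmixed a p₂ h₁ h₂
  · exact (hmixed a' p₁ h₂ h₁).symm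
  · obtain ⟨hp₁, h₁⟩ := bookGraph_adj_inr_inr.1 h₁
    obtain ⟨hp₂, h₂⟩ := bookGraph_adj_inr_inr.1 h₂
    have : (p₁.2 : ℕ) ≠ p₂.2 :=
      fun h => hne (congrArg _ (Prod.ext (hp₁.symm.trans hp₂) (Fin.ext h)))
    simp only [bookColoring, innerColor, Fin.lt_def]
    split_ifs <;> omega

theorem isProperSignedEdgeColoring_bookColoring (hn : 3 ≤ n) (hk : 2 ≤ k) (hmk : 0 < m - k)
    (hπ : ∀ i, pageColor n (π i) ≠ firstColor n l i) :
    IsProperSignedEdgeColoring (bookGraph m n k) (bookSigma m n k l (by omega) hmk) (n + 1)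
      (bookColoring n l π) := by
  refine ⟨fun v w _ => bookColoring_mem_colorSet hn v w,
    fun _ _ h => bookColoring_sign hk hmk h, ?_⟩
  rintro (a | p) w₁ w₂ h₁ h₂ hne
  · exact bookColoring_ne_of_inl (by omega) hk h₁ h₂ hne
  · exact bookColoring_ne_of_inr hk hπ h₁ h₂ hne

lemma pageColor_cycleRange_ne_firstColor {j : Fin n} (hj : 0 < (j : ℕ)) (i : Fin n) :
    pageColor n (j.cycleRange i) ≠ firstColor n (j + 1) i := by
  rw [firstColor]
  split_ifs with hi
  · refine pageColor_injective.ne fun h => ?_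
    have := Fin.coe_cycleRange_of_le (Fin.le_def.2 (Nat.lt_succ_iff.1 hi))
    rw [h] at this
    split_ifs at this with hij
    · exact hj.ne (hij ▸ this.symm)
    · omega
  · rw [Fin.cycleRange_of_gt (Fin.lt_def.2 (by omega))]
    have : pageColor n i ≠ 0 := enumColor_ne_zero (by omega)
    omega

end BookColoring

/-- For all `m ≥ 3`, `n ≥ 3`, `k ≥ 2` with `m - k ≥ 1` and every
`2 ≤ l ≤ n - 1`, the signed generalized book graph `(B(m,n,k), σ_l)`, whose negative
edges are exactly `v₁u₁ⁱ` for `1 ≤ i ≤ l`, has chromatic index `n + 1`. -/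
theorem book_chromatic_index_sigma_l (m n k l : ℕ) (hn : 3 ≤ n)
    (hk : 2 ≤ k) (hmk : 1 ≤ m - k) (hl₁ : 2 ≤ l) (hl₂ : l ≤ n - 1) :
    signedChromaticIndex (bookGraph m n k)
      (bookSigma m n k l (by omega) (by omega)) = n + 1 := by
  obtain ⟨v, w, hw, hadj⟩ := exists_injective_bookGraph_adj (n := n) hk hmk
  obtain ⟨j, rfl⟩ : ∃ j : Fin n, (j : ℕ) + 1 = l := ⟨⟨l - 1, by omega⟩, by simp only; omega⟩
  exact (isProperSignedEdgeColoring_bookColoring hn hk hmk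
    (pageColor_cycleRange_ne_firstColor (by omega))).signedChromaticIndex_eq hw hadj
end
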